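/- Let a₁, a₂ > 0 and τ ∈ ℝ. Let μ = (μ(1), μ(2)) be a two-armed instance with μ₂(1) ≤ τ, μ₂(2) ≤ τ and μ₁(1) < μ₁(2) (so arm 1 is optimal and arm 2 is feasible suboptimal). Then the infimum of D(μ′, μ) over all alternative instances μ′ with a unique optimal arm whose correct output (optimal arm, feasibility flag) differs from that of μ equals min{ a₂(τ − μ₂(1))², a₁(μ₁(2) − μ₁(1))²/4 }. -/

import Mathlib

/-!
An alternative instance must either make arm 0 infeasible, which moves its constraint mean from
`μ₂(0)` past `τ` and costs at least `a₂ (τ - μ₂(0))²`, or make arm 1 beat arm 0 in objective,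
which moves one of the two objective means by at least half the gap and costs at least
`a₁ (μ₁(1) - μ₁(0))² / 4`. Both bounds are approached by instances that push the constraint
mean of arm 0 just past `τ`, resp. move both objective means to their midpoint, arm 0 slightly
beyond it.
-/

open Filter Topology

/-- The divergence between two-armed instances `μ'` and `μ`:
`D(μ', μ) = max_{j∈{0,1}} [a₁(μ₁(j) − μ'₁(j))² + a₂(μ₂(j) − μ'₂(j))²]`. -/
noncomputable def InstDiv (a₁ a₂ : ℝ) (μ' μ : Fin 2 → ℝ × ℝ) : ℝ :=
  max (a₁ * ((μ 0).1 - (μ' 0).1) ^ 2 + a₂ * ((μ 0).2 - (μ' 0).2) ^ 2)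
      (a₁ * ((μ 1).1 - (μ' 1).1) ^ 2 + a₂ * ((μ 1).2 - (μ' 1).2) ^ 2)

/-- The instance is feasible: some arm satisfies the constraint. -/
def InstFeasible (τ : ℝ) (μ : Fin 2 → ℝ × ℝ) : Prop := ∃ i, (μ i).2 ≤ τ

/-- Arm `j` is the (unique) optimal arm of the two-armed instance `μ` with threshold `τ`:
in a feasible instance it is the feasible arm with strictly smaller objective value among
feasible arms; in an infeasible instance it is the arm with strictly smaller constraint value. -/
def IsOptArm (τ : ℝ) (μ : Fin 2 → ℝ × ℝ) (j : Fin 2) : Prop :=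
  (InstFeasible τ μ ∧ (μ j).2 ≤ τ ∧ ∀ i, i ≠ j → (μ i).2 ≤ τ → (μ j).1 < (μ i).1)
  ∨ (¬ InstFeasible τ μ ∧ ∀ i, i ≠ j → (μ j).2 < (μ i).2)

/-- `μ'` is an alternative instance to `μ`: it has a (unique) optimal arm and its correct
output — the pair (optimal arm, feasibility flag) — differs from that of `μ`. -/
def AltInstance (τ : ℝ) (μ' μ : Fin 2 → ℝ × ℝ) : Prop :=
  ∃ j' j : Fin 2, IsOptArm τ μ' j' ∧ IsOptArm τ μ j ∧
    (j' ≠ j ∨ ¬ (InstFeasible τ μ' ↔ InstFeasible τ μ))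

def altDivergences (a₁ a₂ τ : ℝ) (μ : Fin 2 → ℝ × ℝ) : Set ℝ :=
  { d : ℝ | ∃ μ' : Fin 2 → ℝ × ℝ, AltInstance τ μ' μ ∧ d = InstDiv a₁ a₂ μ' μ }

theorem sq_sub_le_sq_sub_of_le_of_le {x y z : ℝ} (hxy : x ≤ y) (hyz : y ≤ z) :
    (y - x) ^ 2 ≤ (x - z) ^ 2 := by
  nlinarith

theorem sq_sub_div_four_le_max {x₀ x₁ y₀ y₁ : ℝ} (hx : x₀ ≤ x₁) (hy : y₁ ≤ y₀) :
    (x₁ - x₀) ^ 2 / 4 ≤ max ((x₀ - y₀) ^ 2) ((x₁ - y₁) ^ 2) := by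
  rcases le_total (x₁ - x₀) (2 * (y₀ - x₀)) with h | h
  · exact le_max_of_le_left (by nlinarith)
  · exact le_max_of_le_right (by nlinarith)

section TwoArmed

variable {τ : ℝ} {μ μ' : Fin 2 → ℝ × ℝ}

theorem IsOptArm.unique {j k : Fin 2} (hj : IsOptArm τ μ j) (hk : IsOptArm τ μ k) : j = k := by
  by_contra hjk
  rcases hj with ⟨hfeas, hjf, hj⟩ | ⟨hinf, hj⟩ <;> rcases hk with ⟨-, hkf, hk⟩ | ⟨hinf', hk⟩
  · exact lt_asymm (hj k (Ne.symm hjk) hkf) (hk j hjk hjf)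
  · exact hinf' hfeas
  · exact hinf ⟨k, hkf⟩
  · exact lt_asymm (hj k (Ne.symm hjk)) (hk j hjk)

theorem isOptArm_of_le {j : Fin 2} (hj : (μ j).2 ≤ τ)
    (hlt : ∀ i, i ≠ j → (μ i).2 ≤ τ → (μ j).1 < (μ i).1) : IsOptArm τ μ j :=
  Or.inl ⟨⟨j, hj⟩, hj, hlt⟩

theorem isOptArm_zero (hf0 : (μ 0).2 ≤ τ) (hopt : (μ 0).1 < (μ 1).1) : IsOptArm τ μ 0 :=
  isOptArm_of_le hf0 fun i hi _ => by rwa [Fin.eq_one_of_ne_zero i hi]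

theorem AltInstance.of_isOptArm_one (hμ : IsOptArm τ μ 0) (hμ' : IsOptArm τ μ' 1) :
    AltInstance τ μ' μ :=
  ⟨1, 0, hμ', hμ, Or.inl one_ne_zero⟩

theorem AltInstance.thresh_lt_or_fst_lt (hf0 : (μ 0).2 ≤ τ) (hopt : (μ 0).1 < (μ 1).1)
    (halt : AltInstance τ μ' μ) : τ < (μ' 0).2 ∨ (μ' 1).1 < (μ' 0).1 := by
  obtain ⟨j', j, hj', hj, hdiff⟩ := halt
  obtain rfl := hj.unique (isOptArm_zero hf0 hopt)
  refine or_iff_not_imp_left.mpr fun h0 => ?_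
  have hfeas' : InstFeasible τ μ' := ⟨0, not_lt.mp h0⟩
  obtain rfl : j' = 1 := by
    refine Fin.eq_one_of_ne_zero j' (hdiff.resolve_right ?_)
    exact not_not_intro (iff_of_true hfeas' ⟨0, hf0⟩)
  rcases hj' with ⟨-, -, hlt⟩ | ⟨hinf, -⟩
  · exact hlt 0 zero_ne_one (not_lt.mp h0)
  · exact absurd hfeas' hinf

variable {a₁ a₂ : ℝ}

theorem continuous_instDiv_left : Continuous fun μ' => InstDiv a₁ a₂ μ' μ := by
  unfold InstDiv
  fun_prop

theorem le_instDiv_of_thresh_lt (ha₁ : 0 ≤ a₁) (ha₂ : 0 ≤ a₂) (hf0 : (μ 0).2 ≤ τ)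
    (h : τ < (μ' 0).2) : a₂ * (τ - (μ 0).2) ^ 2 ≤ InstDiv a₁ a₂ μ' μ :=
  calc a₂ * (τ - (μ 0).2) ^ 2 ≤ a₂ * ((μ 0).2 - (μ' 0).2) ^ 2 :=
        mul_le_mul_of_nonneg_left (sq_sub_le_sq_sub_of_le_of_le hf0 h.le) ha₂
    _ ≤ a₁ * ((μ 0).1 - (μ' 0).1) ^ 2 + a₂ * ((μ 0).2 - (μ' 0).2) ^ 2 :=
        le_add_of_nonneg_left (by positivity)
    _ ≤ InstDiv a₁ a₂ μ' μ := le_max_left _ _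

theorem le_instDiv_of_fst_le (ha₁ : 0 ≤ a₁) (ha₂ : 0 ≤ a₂) (hopt : (μ 0).1 ≤ (μ 1).1)
    (h : (μ' 1).1 ≤ (μ' 0).1) : a₁ * ((μ 1).1 - (μ 0).1) ^ 2 / 4 ≤ InstDiv a₁ a₂ μ' μ :=
  calc a₁ * ((μ 1).1 - (μ 0).1) ^ 2 / 4 = a₁ * (((μ 1).1 - (μ 0).1) ^ 2 / 4) := mul_div_assoc ..
    _ ≤ a₁ * max (((μ 0).1 - (μ' 0).1) ^ 2) (((μ 1).1 - (μ' 1).1) ^ 2) :=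
        mul_le_mul_of_nonneg_left (sq_sub_div_four_le_max hopt h) ha₁
    _ = max (a₁ * ((μ 0).1 - (μ' 0).1) ^ 2) (a₁ * ((μ 1).1 - (μ' 1).1) ^ 2) :=
        mul_max_of_nonneg _ _ ha₁
    _ ≤ InstDiv a₁ a₂ μ' μ :=
        max_le_max (le_add_of_nonneg_right (by positivity)) (le_add_of_nonneg_right (by positivity))

theorem min_le_instDiv_of_altInstance (ha₁ : 0 ≤ a₁) (ha₂ : 0 ≤ a₂) (hf0 : (μ 0).2 ≤ τ)
    (hopt : (μ 0).1 < (μ 1).1) (halt : AltInstance τ μ' μ) :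
    min (a₂ * (τ - (μ 0).2) ^ 2) (a₁ * ((μ 1).1 - (μ 0).1) ^ 2 / 4) ≤ InstDiv a₁ a₂ μ' μ :=
  (halt.thresh_lt_or_fst_lt hf0 hopt).elim
    (fun h => min_le_of_left_le (le_instDiv_of_thresh_lt ha₁ ha₂ hf0 h))
    (fun h => min_le_of_right_le (le_instDiv_of_fst_le ha₁ ha₂ hopt.le h.le))

theorem instDiv_mem_closure_altDivergences {ν : Fin 2 → ℝ × ℝ} {f : ℝ → Fin 2 → ℝ × ℝ}
    (hf : Tendsto f (𝓝[>] 0) (𝓝 ν)) (halt : ∀ δ > 0, AltInstance τ (f δ) μ) :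
    InstDiv a₁ a₂ ν μ ∈ closure (altDivergences a₁ a₂ τ μ) :=
  mem_closure_of_tendsto ((continuous_instDiv_left.tendsto ν).comp hf)
    (eventually_nhdsWithin_of_forall fun δ hδ => ⟨f δ, halt δ hδ, rfl⟩)

theorem thresh_mem_closure_altDivergences (ha₂ : 0 ≤ a₂) (hf0 : (μ 0).2 ≤ τ) (hf1 : (μ 1).2 ≤ τ)
    (hopt : (μ 0).1 < (μ 1).1) :
    a₂ * (τ - (μ 0).2) ^ 2 ∈ closure (altDivergences a₁ a₂ τ μ) := by
  have hf : Continuous fun δ : ℝ => ![((μ 0).1, τ + δ), μ 1] := by fun_prop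
  have halt (δ : ℝ) (hδ : 0 < δ) : AltInstance τ ![((μ 0).1, τ + δ), μ 1] μ := by
    refine .of_isOptArm_one (isOptArm_zero hf0 hopt) (isOptArm_of_le hf1 fun i hi h => ?_)
    obtain rfl : i = 0 := by omega
    exact absurd h (lt_add_of_pos_right τ hδ).not_ge
  convert instDiv_mem_closure_altDivergences (a₁ := a₁) (a₂ := a₂)
    (tendsto_nhdsWithin_of_tendsto_nhds (hf.tendsto 0)) halt using 1
  simp [InstDiv, sub_sq_comm (μ 0).2, mul_nonneg ha₂ (sq_nonneg _)]

theorem gap_mem_closure_altDivergences (hf0 : (μ 0).2 ≤ τ) (hf1 : (μ 1).2 ≤ τ)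
    (hopt : (μ 0).1 < (μ 1).1) :
    a₁ * ((μ 1).1 - (μ 0).1) ^ 2 / 4 ∈ closure (altDivergences a₁ a₂ τ μ) := by
  set c := ((μ 0).1 + (μ 1).1) / 2
  have hf : Continuous fun δ : ℝ => ![(c + δ, (μ 0).2), (c, (μ 1).2)] := by fun_prop
  have halt (δ : ℝ) (hδ : 0 < δ) : AltInstance τ ![(c + δ, (μ 0).2), (c, (μ 1).2)] μ := by
    refine .of_isOptArm_one (isOptArm_zero hf0 hopt) (isOptArm_of_le hf1 fun i hi h => ?_)
    obtain rfl : i = 0 := by omega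
    exact lt_add_of_pos_right c hδ
  convert instDiv_mem_closure_altDivergences (a₁ := a₁) (a₂ := a₂)
    (tendsto_nhdsWithin_of_tendsto_nhds (hf.tendsto 0)) halt using 1
  have h0 : (μ 0).1 - c = -(((μ 1).1 - (μ 0).1) / 2) := by ring
  have h1 : (μ 1).1 - c = ((μ 1).1 - (μ 0).1) / 2 := by ring
  simp only [InstDiv, Matrix.cons_val_zero, Matrix.cons_val_one, add_zero, sub_self]
  rw [h0, h1, neg_sq, max_self]
  ring

end TwoArmed

theorem two_arm_lb_feasible_suboptimal (a₁ a₂ τ : ℝ) (ha₁ : 0 < a₁) (ha₂ : 0 < a₂)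
    (μ : Fin 2 → ℝ × ℝ)
    (hf0 : (μ 0).2 ≤ τ) (hf1 : (μ 1).2 ≤ τ) (hopt : (μ 0).1 < (μ 1).1) :
    sInf { d : ℝ | ∃ μ' : Fin 2 → ℝ × ℝ, AltInstance τ μ' μ ∧ d = InstDiv a₁ a₂ μ' μ }
      = min (a₂ * (τ - (μ 0).2) ^ 2) (a₁ * ((μ 1).1 - (μ 0).1) ^ 2 / 4) := by
  set m := min (a₂ * (τ - (μ 0).2) ^ 2) (a₁ * ((μ 1).1 - (μ 0).1) ^ 2 / 4)
  have hlower : m ∈ lowerBounds (altDivergences a₁ a₂ τ μ) := by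
    rintro _ ⟨μ', halt, rfl⟩
    exact min_le_instDiv_of_altInstance ha₁.le ha₂.le hf0 hopt halt
  have hclosure : m ∈ closure (altDivergences a₁ a₂ τ μ) := by
    obtain h | h : m = _ ∨ m = _ := min_choice _ _ <;> rw [h]
    · exact thresh_mem_closure_altDivergences ha₂.le hf0 hf1 hopt
    · exact gap_mem_closure_altDivergences hf0 hf1 hopt
  exact (isGLB_of_mem_closure hlower hclosure).csInf_eq (closure_nonempty_iff.mp ⟨m, hclosure⟩)
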